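/- (Theorem 3, unsolvable case) Let λ₀ ∈ ℝ with det A(λ₀) = 0, and suppose there exists y ∈ ℝ^{m−1} with A(λ₀)ᵀ y = 0 and ⟨d(λ₀), y⟩ ≠ 0. Then the loaded Volterra integral equation (with λ = λ₀) has no continuous solution on [t₀,T]. -/

import Mathlib

open MeasureTheory Matrix

/-!
A continuous solution `x` of the loaded equation solves the Volterra equation
`x = λ₀ ∫ K x + g` with `g = f - ∑ⱼ aⱼ x(tⱼ)`. The only continuous solution of that equation is
`g + ∫ R g`: it is a solution by the resolvent identity `R = λK + λ ∫ K R` and Fubini on the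
triangle, and solutions are unique by the factorial estimate `|u t| ≤ C (|λ| M (t - t₀))ⁿ / n!`
for the difference `u` of two of them. Evaluated at the nodes `tᵢ`, `x = g + ∫ R g` becomes
`A(λ₀) c = d(λ₀)` for `c = (x(tⱼ))ⱼ`, so `⟨d(λ₀), y⟩ = ⟨c, A(λ₀)ᵀ y⟩ = 0`.
To work with kernels continuous on all of `ℝ²`, `K` is first extended from the triangle by Tietze.
-/

open Set Filter Function intervalIntegral
open scoped Interval Nat Topology

theorem ContinuousOn.exists_continuous_eqOn {X : Type*} [TopologicalSpace X] [NormalSpace X]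
    {s : Set X} (hs : IsClosed s) {f : X → ℝ} (hf : ContinuousOn f s) :
    ∃ g : X → ℝ, Continuous g ∧ EqOn g f s := by
  obtain ⟨g, hg⟩ := ContinuousMap.exists_restrict_eq hs ⟨s.domRestrict f, hf.domRestrict⟩
  exact ⟨g, g.continuous, fun x hx => congr($hg ⟨x, hx⟩)⟩

theorem exists_continuous_eq_on_triangle {K : ℝ → ℝ → ℝ} {a b : ℝ}
    (hK : ContinuousOn (fun q : ℝ × ℝ => K q.1 q.2) {q : ℝ × ℝ | a ≤ q.2 ∧ q.2 ≤ q.1 ∧ q.1 ≤ b}) :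
    ∃ L : ℝ → ℝ → ℝ, Continuous (uncurry L) ∧ ∀ t s, a ≤ s → s ≤ t → t ≤ b → L t s = K t s := by
  have hΔ : IsClosed {q : ℝ × ℝ | a ≤ q.2 ∧ q.2 ≤ q.1 ∧ q.1 ≤ b} :=
    (isClosed_le continuous_const continuous_snd).inter
      ((isClosed_le continuous_snd continuous_fst).inter
        (isClosed_le continuous_fst continuous_const))
  obtain ⟨L, hLc, hL⟩ := hK.exists_continuous_eqOn hΔ
  exact ⟨fun t s => L (t, s), hLc, fun t s h₁ h₂ h₃ => hL ⟨h₁, h₂, h₃⟩⟩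

theorem abs_intervalIntegral_le_mul_pow_succ_div {u : ℝ → ℝ} {C s t : ℝ} {n : ℕ}
    (hu : ∀ z ∈ Ι s t, |u z| ≤ C * |z - s| ^ n) :
    |∫ z in s..t, u z| ≤ C * (|t - s| ^ (n + 1) / (n + 1)) :=
  calc |∫ z in s..t, u z| = ‖∫ z in Ι s t, u z‖ := norm_integral_eq_norm_integral_uIoc u
    _ ≤ ∫ z in Ι s t, C * |z - s| ^ n :=
      norm_integral_le_of_norm_le
        (by fun_prop : Continuous fun z => C * |z - s| ^ n).integrableOn_uIoc
        (ae_restrict_of_forall_mem measurableSet_uIoc hu)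
    _ = C * (|t - s| ^ (n + 1) / (n + 1)) := by
      rw [MeasureTheory.integral_const_mul, integral_pow_abs_sub_uIoc]

theorem integral_integral_swap_triangle {G : ℝ → ℝ → ℝ} (hG : Continuous (uncurry G))
    {a b : ℝ} (hab : a ≤ b) :
    ∫ s in a..b, ∫ z in a..s, G s z = ∫ z in a..b, ∫ s in z..b, G s z := by
  set H : ℝ → ℝ → ℝ := fun s => (Iic s).indicator (G s)
  have hH : Integrable (uncurry H)
      ((volume.restrict (Ioc a b)).prod (volume.restrict (Ioc a b))) := by
    have hHG : uncurry H = {q : ℝ × ℝ | q.2 ≤ q.1}.indicator (uncurry G) := by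
      ext ⟨s, z⟩
      simp [H, indicator]
    rw [Measure.prod_restrict, hHG]
    exact ((hG.continuousOn.integrableOn_compact (isCompact_Icc.prod isCompact_Icc)).mono_set
      (prod_mono Ioc_subset_Icc_self Ioc_subset_Icc_self)).indicator
      (isClosed_le continuous_snd continuous_fst).measurableSet
  have hz : EqOn (fun s => ∫ z in a..s, G s z) (fun s => ∫ z in Ioc a b, H s z) (Ioc a b) := by
    intro s hs
    simp only [H]
    rw [setIntegral_indicator measurableSet_Iic, Ioc_inter_Iic, min_eq_right hs.2,
      integral_of_le hs.1.le]
  have hs : EqOn (fun z => ∫ s in z..b, G s z) (fun z => ∫ s in Ioc a b, H s z) (Ioc a b) := by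
    intro z hz
    have hHz : (fun s => H s z) = (Ici z).indicator fun s => G s z := by
      ext s
      simp [H, indicator]
    have hset : Ioc a b ∩ Ici z = Icc z b := by grind
    simp only [hHz]
    rw [setIntegral_indicator measurableSet_Ici, hset, integral_Icc_eq_integral_Ioc,
      integral_of_le hz.2]
  rw [integral_of_le hab, integral_of_le hab, setIntegral_congr_fun measurableSet_Ioc hz,
    setIntegral_congr_fun measurableSet_Ioc hs]
  exact integral_integral_swap hH

theorem Matrix.mulVec_eq_of_forall_add_sum {n R : Type*} [Fintype n] [DecidableEq n] [Semiring R]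
    {A B : Matrix n n R} {c d : n → R} (hA : ∀ i j, A i j = (if i = j then 1 else 0) + B i j)
    (h : ∀ i, c i + ∑ j, B i j * c j = d i) : A *ᵥ c = d := by
  have hA' : A = 1 + B := by
    ext i j
    rw [hA, add_apply, one_apply]
  rw [hA', add_mulVec, one_mulVec]
  exact funext h

theorem Matrix.dotProduct_eq_zero_of_mulVec_eq {n R : Type*} [Fintype n] [CommSemiring R]
    {A : Matrix n n R} {c d y : n → R} (hc : A *ᵥ c = d) (hy : Aᵀ *ᵥ y = 0) : d ⬝ᵥ y = 0 := by
  rw [← hc, dotProduct_comm, dotProduct_mulVec, ← mulVec_transpose, hy, zero_dotProduct]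

namespace Volterra

variable {K : ℝ → ℝ → ℝ} {a b M lam : ℝ}

theorem continuous_intervalIntegral_snd_fst {G : ℝ × ℝ → ℝ → ℝ} (hG : Continuous (uncurry G)) :
    Continuous fun q : ℝ × ℝ => ∫ z in q.2..q.1, G q z := by
  have h : ∀ q : ℝ × ℝ,
      ∫ z in q.2..q.1, G q z = (∫ z in 0..q.1, G q z) - ∫ z in 0..q.2, G q z :=
    fun q => (integral_interval_sub_left ((hG.uncurry_left q).intervalIntegrable _ _)
      ((hG.uncurry_left q).intervalIntegrable _ _)).symm
  simp_rw [h]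
  exact (continuous_parametric_intervalIntegral_of_continuous hG continuous_fst).sub
    (continuous_parametric_intervalIntegral_of_continuous hG continuous_snd)

theorem exists_abs_le_on_square (hK : Continuous (uncurry K)) (a b : ℝ) :
    ∃ M, ∀ t ∈ Icc a b, ∀ s ∈ Icc a b, |K t s| ≤ M := by
  obtain ⟨M, hM⟩ :=
    (isCompact_Icc.prod isCompact_Icc).exists_bound_of_continuousOn hK.continuousOn
  exact ⟨M, fun t ht s hs => hM (t, s) ⟨ht, hs⟩⟩

/-- `iteratedKernel K n` is the iterated kernel `K_{n+1}` of the paper. -/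
noncomputable def iteratedKernel (K : ℝ → ℝ → ℝ) : ℕ → ℝ → ℝ → ℝ
  | 0 => K
  | n + 1 => fun t s => ∫ z in s..t, K t z * iteratedKernel K n z s

theorem continuous_iteratedKernel (hK : Continuous (uncurry K)) (n : ℕ) :
    Continuous (uncurry (iteratedKernel K n)) := by
  induction n with
  | zero => exact hK
  | succ n ih =>
    exact continuous_intervalIntegral_snd_fst
      (G := fun q z => K q.1 z * iteratedKernel K n z q.2)
      ((hK.comp ((continuous_fst.comp continuous_fst).prodMk continuous_snd)).mul
        (ih.comp (continuous_snd.prodMk (continuous_snd.comp continuous_fst))))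

theorem abs_iteratedKernel_le (hM : ∀ t ∈ Icc a b, ∀ s ∈ Icc a b, |K t s| ≤ M) (n : ℕ)
    {t s : ℝ} (ht : t ∈ Icc a b) (hs : s ∈ Icc a b) :
    |iteratedKernel K n t s| ≤ M ^ (n + 1) * |t - s| ^ n / n ! := by
  induction n generalizing t with
  | zero => simpa [iteratedKernel] using hM t ht s hs
  | succ n ih =>
    have hM0 : 0 ≤ M := (abs_nonneg _).trans (hM t ht s hs)
    have key := abs_intervalIntegral_le_mul_pow_succ_div
      (u := fun z => K t z * iteratedKernel K n z s) (C := M * (M ^ (n + 1) / n !)) (n := n)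
      fun z hz => by
        have hz : z ∈ Icc a b := uIcc_subset_Icc hs ht (uIoc_subset_uIcc hz)
        rw [abs_mul, mul_assoc, ← mul_div_right_comm]
        exact mul_le_mul (hM t ht z hz) (ih hz) (abs_nonneg _) hM0
    refine key.trans_eq ?_
    rw [Nat.factorial_succ]
    push_cast
    field_simp
    ring

noncomputable def resolventKernel (K : ℝ → ℝ → ℝ) (lam t s : ℝ) : ℝ :=
  ∑' n : ℕ, lam ^ (n + 1) * iteratedKernel K n t s

theorem abs_resolventKernel_term_le (hM : ∀ t ∈ Icc a b, ∀ s ∈ Icc a b, |K t s| ≤ M) (n : ℕ)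
    {t s : ℝ} (ht : t ∈ Icc a b) (hs : s ∈ Icc a b) :
    |lam ^ (n + 1) * iteratedKernel K n t s| ≤
      |lam| * M * ((|lam| * M * (b - a)) ^ n / n !) := by
  have hM0 : 0 ≤ M := (abs_nonneg _).trans (hM t ht s hs)
  have hts : |t - s| ≤ b - a :=
    abs_sub_le_iff.2 ⟨by linarith [ht.2, hs.1], by linarith [ht.1, hs.2]⟩
  calc |lam ^ (n + 1) * iteratedKernel K n t s|
      ≤ |lam| ^ (n + 1) * (M ^ (n + 1) * |t - s| ^ n / n !) := by
        rw [abs_mul, abs_pow]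
        exact mul_le_mul_of_nonneg_left (abs_iteratedKernel_le hM n ht hs) (by positivity)
    _ ≤ |lam| ^ (n + 1) * (M ^ (n + 1) * (b - a) ^ n / n !) := by gcongr
    _ = |lam| * M * ((|lam| * M * (b - a)) ^ n / n !) := by rw [mul_pow, mul_pow]; ring

theorem summable_resolventKernel_majorant (lam M c : ℝ) :
    Summable fun n : ℕ => |lam| * M * ((|lam| * M * c) ^ n / n !) :=
  (Real.summable_pow_div_factorial _).mul_left _

theorem continuousOn_resolventKernel (hK : Continuous (uncurry K))
    (hM : ∀ t ∈ Icc a b, ∀ s ∈ Icc a b, |K t s| ≤ M) :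
    ContinuousOn (uncurry (resolventKernel K lam)) (Icc a b ×ˢ Icc a b) :=
  continuousOn_tsum
    (fun n => (continuous_const.mul (continuous_iteratedKernel hK n)).continuousOn)
    (summable_resolventKernel_majorant lam M (b - a))
    fun n _ hq => abs_resolventKernel_term_le hM n hq.1 hq.2

theorem continuous_resolventKernel (hK : Continuous (uncurry K)) :
    Continuous (uncurry (resolventKernel K lam)) := by
  refine continuous_iff_continuousAt.2 fun q => ?_
  set r := |q.1| + |q.2| + 1
  obtain ⟨M, hM⟩ := exists_abs_le_on_square hK (-r) r
  have hmem : ∀ x, |x| ≤ |q.1| + |q.2| → Icc (-r) r ∈ 𝓝 x := fun x hx =>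
    Icc_mem_nhds (by linarith [neg_abs_le x]) (by linarith [le_abs_self x])
  exact (continuousOn_resolventKernel hK hM).continuousAt (prod_mem_nhds
    (hmem _ (le_add_of_nonneg_right (abs_nonneg _)))
    (hmem _ (le_add_of_nonneg_left (abs_nonneg _))))

theorem resolventKernel_eq_add_integral (hK : Continuous (uncurry K)) (lam t s : ℝ) :
    resolventKernel K lam t s =
      lam * K t s + lam * ∫ z in s..t, K t z * resolventKernel K lam z s := by
  obtain ⟨M, hM⟩ := exists_abs_le_on_square hK (min s t) (max s t)
  have ht : t ∈ uIcc s t := right_mem_uIcc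
  have hs : s ∈ uIcc s t := left_mem_uIcc
  have hsum : ∀ {z}, z ∈ uIcc s t →
      HasSum (fun n => lam ^ (n + 1) * iteratedKernel K n z s) (resolventKernel K lam z s) :=
    fun hz => ((summable_resolventKernel_majorant lam M _).of_norm_bounded
      fun n => abs_resolventKernel_term_le hM n hz hs).hasSum
  have hint : HasSum (fun n => ∫ z in s..t, K t z * (lam ^ (n + 1) * iteratedKernel K n z s))
      (∫ z in s..t, K t z * resolventKernel K lam z s) := by
    refine hasSum_integral_of_dominated_convergence
      (fun n _ => M * (|lam| * M * ((|lam| * M * (max s t - min s t)) ^ n / n !)))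
      (fun n => ((hK.uncurry_left t).mul (continuous_const.mul
        ((continuous_iteratedKernel hK n).uncurry_right s))).aestronglyMeasurable)
      (fun n => Eventually.of_forall fun z hz => ?_)
      (Eventually.of_forall fun _ _ => (summable_resolventKernel_majorant lam M _).mul_left M)
      intervalIntegrable_const
      (Eventually.of_forall fun z hz => (hsum (uIoc_subset_uIcc hz)).mul_left (K t z))
    have hz : z ∈ uIcc s t := uIoc_subset_uIcc hz
    rw [Real.norm_eq_abs, abs_mul]
    exact mul_le_mul (hM t ht z hz) (abs_resolventKernel_term_le hM n hz hs) (abs_nonneg _)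
      ((abs_nonneg _).trans (hM t ht z hz))
  have hshift : HasSum (fun n => lam ^ (n + 1 + 1) * iteratedKernel K (n + 1) t s)
      (lam * ∫ z in s..t, K t z * resolventKernel K lam z s) := by
    refine (hint.mul_left lam).congr_fun fun n => ?_
    rw [iteratedKernel, ← intervalIntegral.integral_const_mul,
      ← intervalIntegral.integral_const_mul]
    congr 1 with z
    ring
  rw [resolventKernel, (hsum ht).summable.tsum_eq_zero_add, hshift.tsum_eq, zero_add, pow_one]
  rfl

theorem eqOn_zero_of_eq_mul_integral (hK : Continuous (uncurry K)) {u : ℝ → ℝ}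
    (hu : ContinuousOn u (Icc a b)) (h : ∀ t ∈ Icc a b, u t = lam * ∫ s in a..t, K t s * u s) :
    EqOn u 0 (Icc a b) := by
  obtain ⟨M, hM⟩ := exists_abs_le_on_square hK a b
  obtain ⟨C, hC⟩ := isCompact_Icc.exists_bound_of_continuousOn hu
  set L := |lam| * M
  have hbound : ∀ n : ℕ, ∀ t ∈ Icc a b, |u t| ≤ C * ((L * |t - a|) ^ n / n !) := by
    intro n
    induction n with
    | zero => simpa using hC
    | succ n ih =>
      intro t ht
      have hM0 : 0 ≤ M := (abs_nonneg _).trans (hM t ht t ht)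
      have key := abs_intervalIntegral_le_mul_pow_succ_div (u := fun s => K t s * u s)
        (C := M * (C * (L ^ n / n !))) (n := n) fun s hs => by
          have hs : s ∈ Icc a b :=
            uIcc_subset_Icc (left_mem_Icc.2 (ht.1.trans ht.2)) ht (uIoc_subset_uIcc hs)
          rw [abs_mul]
          calc |K t s| * |u s| ≤ M * (C * ((L * |s - a|) ^ n / n !)) :=
                mul_le_mul (hM t ht s hs) (ih s hs) (abs_nonneg _) hM0
            _ = M * (C * (L ^ n / n !)) * |s - a| ^ n := by rw [mul_pow]; ring
      rw [h t ht, abs_mul]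
      calc |lam| * |∫ s in a..t, K t s * u s|
          ≤ |lam| * (M * (C * (L ^ n / n !)) * (|t - a| ^ (n + 1) / (n + 1))) := by gcongr
        _ = C * ((L * |t - a|) ^ (n + 1) / (n + 1)!) := by
          rw [Nat.factorial_succ, mul_pow]
          push_cast
          field_simp
          ring
  intro t ht
  have hlim := (FloorSemiring.tendsto_pow_div_factorial_atTop (L * |t - a|)).const_mul C
  rw [mul_zero] at hlim
  exact abs_nonpos_iff.1 (ge_of_tendsto' hlim fun n => hbound n t ht)

theorem integral_mul_integral_resolventKernel_mul (hK : Continuous (uncurry K)) {g : ℝ → ℝ}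
    (hg : Continuous g) {t : ℝ} (hat : a ≤ t) :
    lam * ∫ s in a..t, K t s * ∫ z in a..s, resolventKernel K lam s z * g z =
      ∫ z in a..t, (resolventKernel K lam t z - lam * K t z) * g z := by
  have hG : Continuous (uncurry fun s z => K t s * (resolventKernel K lam s z * g z)) :=
    ((hK.uncurry_left t).comp continuous_fst).mul
      ((continuous_resolventKernel hK).mul (hg.comp continuous_snd))
  calc lam * ∫ s in a..t, K t s * ∫ z in a..s, resolventKernel K lam s z * g z
      = lam * ∫ z in a..t, ∫ s in z..t, K t s * (resolventKernel K lam s z * g z) := by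
        rw [← integral_integral_swap_triangle hG hat]
        simp_rw [intervalIntegral.integral_const_mul]
    _ = ∫ z in a..t, (lam * ∫ s in z..t, K t s * resolventKernel K lam s z) * g z := by
        rw [← intervalIntegral.integral_const_mul]
        congr 1 with z
        rw [mul_assoc, ← intervalIntegral.integral_mul_const]
        simp_rw [mul_assoc]
    _ = ∫ z in a..t, (resolventKernel K lam t z - lam * K t z) * g z := by
        simp_rw [resolventKernel_eq_add_integral hK lam t, add_sub_cancel_left]

theorem eq_add_integral_resolventKernel_mul (hK : Continuous (uncurry K)) {g x : ℝ → ℝ}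
    (hg : Continuous g) (hx : ContinuousOn x (Icc a b))
    (h : ∀ t ∈ Icc a b, x t = lam * (∫ s in a..t, K t s * x s) + g t) :
    ∀ t ∈ Icc a b, x t = g t + ∫ s in a..t, resolventKernel K lam t s * g s := by
  set w : ℝ → ℝ := fun t => g t + ∫ s in a..t, resolventKernel K lam t s * g s
  have hRg : Continuous (uncurry fun t s => resolventKernel K lam t s * g s) :=
    (continuous_resolventKernel hK).mul (hg.comp continuous_snd)
  have hRg_int : Continuous fun t => ∫ s in a..t, resolventKernel K lam t s * g s :=
    continuous_parametric_intervalIntegral_of_continuous hRg continuous_id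
  have hwc : Continuous w := hg.add hRg_int
  have hKint : ∀ {t v}, Continuous v → IntervalIntegrable (fun s => K t s * v s) volume a t :=
    fun hv => ((hK.uncurry_left _).mul hv).intervalIntegrable _ _
  have hw : ∀ t ∈ Icc a b, w t = lam * (∫ s in a..t, K t s * w s) + g t := by
    intro t ht
    simp only [w, mul_add]
    rw [integral_add (hKint hg) (hKint hRg_int), mul_add,
      integral_mul_integral_resolventKernel_mul hK hg ht.1]
    simp_rw [sub_mul, mul_assoc]
    rw [integral_sub ((hRg.uncurry_left t).intervalIntegrable _ _) ((hKint hg).const_mul lam),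
      intervalIntegral.integral_const_mul]
    ring
  have hxw : ∀ t ∈ Icc a b, x t - w t = lam * ∫ s in a..t, K t s * (x s - w s) := by
    intro t ht
    have hKx : IntervalIntegrable (fun s => K t s * x s) volume a t :=
      (((hK.uncurry_left t).continuousOn.mul hx).mono
        (uIcc_subset_Icc (left_mem_Icc.2 (ht.1.trans ht.2)) ht)).intervalIntegrable
    simp_rw [mul_sub]
    rw [integral_sub hKx (hKint hwc), h t ht, hw t ht]
    ring
  intro t ht
  exact sub_eq_zero.1 (eqOn_zero_of_eq_mul_integral hK (hx.sub hwc.continuousOn) hxw ht)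

theorem sub_sum_add_integral_mul_sub_sum {ι : Type*} [Fintype ι] {ρ f : ℝ → ℝ}
    {e : ι → ℝ → ℝ} {u v : ℝ} (hf : IntervalIntegrable (fun s => ρ s * f s) volume u v)
    (he : ∀ j, IntervalIntegrable (fun s => ρ s * e j s) volume u v) (c : ι → ℝ) (y : ℝ) :
    (f y - ∑ j, e j y * c j) + ∫ s in u..v, ρ s * (f s - ∑ j, e j s * c j) =
      (f y + ∫ s in u..v, ρ s * f s) - ∑ j, (e j y + ∫ s in u..v, ρ s * e j s) * c j := by
  have hsum : IntervalIntegrable (fun s => ∑ j, ρ s * e j s * c j) volume u v := by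
    simpa only [Finset.sum_fn] using
      IntervalIntegrable.sum Finset.univ fun j _ => (he j).mul_const (c j)
  simp_rw [mul_sub, Finset.mul_sum, ← mul_assoc]
  rw [integral_sub hf hsum, integral_finsetSum fun j _ => (he j).mul_const (c j)]
  simp_rw [intervalIntegral.integral_mul_const, add_mul, Finset.sum_add_distrib]
  ring

theorem add_sum_mul_eq_add_integral_resolventKernel {ι : Type*} [Fintype ι]
    (hK : Continuous (uncurry K)) {f x : ℝ → ℝ} {e : ι → ℝ → ℝ} {c : ι → ℝ}
    (hf : ContinuousOn f (Icc a b)) (he : ∀ j, ContinuousOn (e j) (Icc a b))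
    (hx : ContinuousOn x (Icc a b))
    (h : ∀ t ∈ Icc a b, x t + ∑ j, e j t * c j = lam * (∫ s in a..t, K t s * x s) + f t) :
    ∀ t ∈ Icc a b, x t + ∑ j, (e j t + ∫ s in a..t, resolventKernel K lam t s * e j s) * c j =
      f t + ∫ s in a..t, resolventKernel K lam t s * f s := by
  have hfec : ContinuousOn (fun t => f t - ∑ j, e j t * c j) (Icc a b) :=
    hf.sub (continuousOn_finsetSum _ fun j _ => (he j).mul continuousOn_const)
  obtain ⟨g, hgc, hg⟩ := hfec.exists_continuous_eqOn isClosed_Icc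
  intro t ht
  have hsub : uIcc a t ⊆ Icc a b := uIcc_subset_Icc (left_mem_Icc.2 (ht.1.trans ht.2)) ht
  have hRt : ContinuousOn (resolventKernel K lam t) (uIcc a t) :=
    ((continuous_resolventKernel hK).uncurry_left t).continuousOn
  have hrep := eq_add_integral_resolventKernel_mul (lam := lam) hK hgc hx
    (fun t ht => by rw [hg ht]; linarith [h t ht]) t ht
  have hRg : ∫ s in a..t, resolventKernel K lam t s * g s =
      ∫ s in a..t, resolventKernel K lam t s * (f s - ∑ j, e j s * c j) :=
    integral_congr fun s hs => by simp only [hg (hsub hs)]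
  rw [hg ht, hRg, sub_sum_add_integral_mul_sub_sum (hRt.mul (hf.mono hsub)).intervalIntegrable
      fun j => (hRt.mul ((he j).mono hsub)).intervalIntegrable] at hrep
  linarith

theorem iteratedKernel_eq_of_eqOn_triangle {L : ℝ → ℝ → ℝ} {Ln : ℕ → ℝ → ℝ → ℝ}
    (hKL : ∀ t s, a ≤ s → s ≤ t → t ≤ b → K t s = L t s) (hL1 : ∀ t s, Ln 1 t s = L t s)
    (hLrec : ∀ n, 2 ≤ n → ∀ t s, Ln n t s = ∫ z in s..t, L t z * Ln (n - 1) z s) (n : ℕ) :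
    ∀ t s, a ≤ s → s ≤ t → t ≤ b → iteratedKernel K n t s = Ln (n + 1) t s := by
  induction n with
  | zero => exact fun t s has hst htb => (hKL t s has hst htb).trans (hL1 t s).symm
  | succ n ih =>
    intro t s has hst htb
    rw [hLrec (n + 2) le_add_self, iteratedKernel]
    refine integral_congr fun z hz => ?_
    rw [uIcc_of_le hst] at hz
    simp only [hKL t z (has.trans hz.1) hz.2 htb, ih z s has hz.1 (hz.2.trans htb)]
    rfl

theorem resolventKernel_eq_of_eqOn_triangle {L : ℝ → ℝ → ℝ} {Ln : ℕ → ℝ → ℝ → ℝ}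
    (hKL : ∀ t s, a ≤ s → s ≤ t → t ≤ b → K t s = L t s) (hL1 : ∀ t s, Ln 1 t s = L t s)
    (hLrec : ∀ n, 2 ≤ n → ∀ t s, Ln n t s = ∫ z in s..t, L t z * Ln (n - 1) z s)
    {t s : ℝ} (has : a ≤ s) (hst : s ≤ t) (htb : t ≤ b) :
    resolventKernel K lam t s = ∑' n : ℕ, lam ^ (n + 1) * Ln (n + 1) t s := by
  simp only [resolventKernel, iteratedKernel_eq_of_eqOn_triangle hKL hL1 hLrec _ t s has hst htb]

end Volterra

open Volterra

theorem lvie_no_solution_of_unsolvable_slae_general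
    (t₀ T : ℝ) (m : ℕ)
    (p : Fin (m - 1) → ℝ)
    (hp : ∀ j, t₀ < p j ∧ p j < T)
    (f : ℝ → ℝ) (hf : ContinuousOn f (Set.Icc t₀ T))
    (a : Fin (m - 1) → ℝ → ℝ) (ha : ∀ j, ContinuousOn (a j) (Set.Icc t₀ T))
    (K : ℝ → ℝ → ℝ)
    (hK : ContinuousOn (fun q : ℝ × ℝ => K q.1 q.2)
      {q : ℝ × ℝ | t₀ ≤ q.2 ∧ q.2 ≤ q.1 ∧ q.1 ≤ T})
    (lam₀ : ℝ)
    (Kn : ℕ → ℝ → ℝ → ℝ)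
    (hKn1 : ∀ t s, Kn 1 t s = K t s)
    (hKnrec : ∀ n, 2 ≤ n → ∀ t s, Kn n t s = ∫ z in s..t, K t z * Kn (n - 1) z s)
    (R : ℝ → ℝ → ℝ → ℝ)
    (hR : ∀ t s lam', R t s lam' = ∑' n : ℕ, lam' ^ (n + 1) * Kn (n + 1) t s)
    (F : ℝ → ℝ → ℝ)
    (hF : ∀ t lam', F t lam' = f t + ∫ s in t₀..t, R t s lam' * f s)
    (b : Fin (m - 1) → ℝ → ℝ → ℝ)
    (hb : ∀ j t lam', b j t lam' = a j t + ∫ s in t₀..t, R t s lam' * a j s)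
    (A : Matrix (Fin (m - 1)) (Fin (m - 1)) ℝ)
    (hA : ∀ i j, A i j = (if i = j then 1 else 0) + b j (p i) lam₀)
    (d : Fin (m - 1) → ℝ)
    (hd : ∀ i, d i = F (p i) lam₀)
    (y : Fin (m - 1) → ℝ) (hy : Aᵀ *ᵥ y = 0) (hdy : d ⬝ᵥ y ≠ 0) :
    ¬ ∃ x : ℝ → ℝ, ContinuousOn x (Set.Icc t₀ T) ∧
      ∀ t ∈ Set.Icc t₀ T,
        x t + ∑ j, a j t * x (p j) =
          lam₀ * (∫ s in t₀..t, K t s * x s) + f t := by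
  rintro ⟨x, hxc, hx⟩
  obtain ⟨L, hLc, hLK⟩ := exists_continuous_eq_on_triangle hK
  have hL : ∀ t ∈ Icc t₀ T, ∀ v : ℝ → ℝ, ∫ s in t₀..t, L t s * v s = ∫ s in t₀..t, K t s * v s :=
    fun t ht v => integral_congr fun s hs => by
      rw [uIcc_of_le ht.1] at hs
      rw [hLK t s hs.1 hs.2 ht.2]
  have hRL : ∀ t ∈ Icc t₀ T, ∀ v : ℝ → ℝ,
      ∫ s in t₀..t, resolventKernel L lam₀ t s * v s = ∫ s in t₀..t, R t s lam₀ * v s :=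
    fun t ht v => integral_congr fun s hs => by
      rw [uIcc_of_le ht.1] at hs
      rw [resolventKernel_eq_of_eqOn_triangle hLK hKn1 hKnrec hs.1 hs.2 ht.2, hR]
  have hnodal := add_sum_mul_eq_add_integral_resolventKernel hLc hf ha hxc
    (c := fun j => x (p j)) fun t ht => by rw [hL t ht]; exact hx t ht
  refine hdy (dotProduct_eq_zero_of_mulVec_eq
    (mulVec_eq_of_forall_add_sum (c := fun j => x (p j)) hA fun i => ?_) hy)
  have hpi : p i ∈ Icc t₀ T := ⟨(hp i).1.le, (hp i).2.le⟩
  simpa only [hd, hF, hb, hRL _ hpi] using hnodal (p i) hpi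

/-- Theorem 3 (unsolvable case): if det A(λ₀) = 0 and d(λ₀) is not orthogonal to
some solution y of the adjoint homogeneous system A(λ₀)ᵀ y = 0, then the LVIE has
no continuous solution on [t₀,T]. -/
theorem lvie_no_solution_of_unsolvable_slae
    (t₀ T : ℝ) (ht : t₀ < T) (m : ℕ) (hm : 2 ≤ m)
    (p : Fin (m - 1) → ℝ) (hpmono : StrictMono p)
    (hp : ∀ j, t₀ < p j ∧ p j < T)
    (f : ℝ → ℝ) (hf : ContinuousOn f (Set.Icc t₀ T))
    (a : Fin (m - 1) → ℝ → ℝ) (ha : ∀ j, ContinuousOn (a j) (Set.Icc t₀ T))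
    (K : ℝ → ℝ → ℝ)
    (hK : ContinuousOn (fun q : ℝ × ℝ => K q.1 q.2)
      {q : ℝ × ℝ | t₀ ≤ q.2 ∧ q.2 ≤ q.1 ∧ q.1 ≤ T})
    (lam₀ : ℝ)
    (Kn : ℕ → ℝ → ℝ → ℝ)
    (hKn1 : ∀ t s, Kn 1 t s = K t s)
    (hKnrec : ∀ n, 2 ≤ n → ∀ t s, Kn n t s = ∫ z in s..t, K t z * Kn (n - 1) z s)
    (R : ℝ → ℝ → ℝ → ℝ)
    (hR : ∀ t s lam', R t s lam' = ∑' n : ℕ, lam' ^ (n + 1) * Kn (n + 1) t s)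
    (F : ℝ → ℝ → ℝ)
    (hF : ∀ t lam', F t lam' = f t + ∫ s in t₀..t, R t s lam' * f s)
    (b : Fin (m - 1) → ℝ → ℝ → ℝ)
    (hb : ∀ j t lam', b j t lam' = a j t + ∫ s in t₀..t, R t s lam' * a j s)
    (A : Matrix (Fin (m - 1)) (Fin (m - 1)) ℝ)
    (hA : ∀ i j, A i j = (if i = j then 1 else 0) + b j (p i) lam₀)
    (d : Fin (m - 1) → ℝ)
    (hd : ∀ i, d i = F (p i) lam₀)
    (hdet : A.det = 0)
    (y : Fin (m - 1) → ℝ) (hy : Aᵀ *ᵥ y = 0) (hdy : d ⬝ᵥ y ≠ 0) :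
    ¬ ∃ x : ℝ → ℝ, ContinuousOn x (Set.Icc t₀ T) ∧
      ∀ t ∈ Set.Icc t₀ T,
        x t + ∑ j, a j t * x (p j) =
          lam₀ * (∫ s in t₀..t, K t s * x s) + f t :=
  lvie_no_solution_of_unsolvable_slae_general t₀ T m p hp f hf a ha K hK lam₀ Kn hKn1 hKnrec R hR F
    hF b hb A hA d hd y hy hdy
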